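/- In the addition-free theta-term system T, substitution of a fixed γ < Ω_1 for the last zero is strictly monotone: if α < β and γ < Ω_1, then α[γ] < β[γ]. -/

import Mathlib

/-- Addition-free theta terms. -/
inductive TTerm : Type
  | zero : TTerm
  | theta : ℕ → TTerm → TTerm
  deriving DecidableEq

namespace TTerm

/-- `S 0 = -1`, `S (ϑ_i α) = i`. -/
def S : TTerm → ℤ
  | zero => -1
  | theta i _ => i

/-- Membership in the term system `T`: `ϑ_i α` is formed only when `S α ≤ i + 1`. -/
inductive WF : TTerm → Prop
  | zero : WF zero
  | theta {i : ℕ} {a : TTerm} : WF a → S a ≤ (i : ℤ) + 1 → WF (theta i a)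

/-- Coefficients `k_i`. -/
def k (i : ℕ) : TTerm → TTerm
  | zero => zero
  | theta j b => if j ≤ i then theta j b else k i b

mutual
/-- The linear order on theta terms. -/
inductive Lt : TTerm → TTerm → Prop
  | zero {a : TTerm} : a ≠ zero → Lt zero a
  | idx {i j : ℕ} {a b : TTerm} : i < j → Lt (theta i a) (theta j b)
  | left {i : ℕ} {a b : TTerm} : Lt a b → Lt (k i a) (theta i b) →
      Lt (theta i a) (theta i b)
  | right {i : ℕ} {a b : TTerm} : Lt b a → Le (theta i a) (k i b) →
      Lt (theta i a) (theta i b)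

inductive Le : TTerm → TTerm → Prop
  | refl {a : TTerm} : Le a a
  | of_lt {a b : TTerm} : Lt a b → Le a b
end

end TTerm

/-- Replacing the last zero of `α` by `γ`. -/
def TTerm.subst : TTerm → TTerm → TTerm
  | TTerm.zero, g => g
  | TTerm.theta i b, g => TTerm.theta i (TTerm.subst b g)

/-
If `γ < Ω₁` then `γ` is `0` or `ϑ₀ δ`, so `k_i γ = γ` for all `i` and hence
`k_i (α[γ]) = (k_i α)[γ]`. Since substitution commutes with `ϑ_i`, an induction on the
derivation of `α < β` then preserves every clause of the order except `0 < β`, which becomes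
`γ < β[γ]` for `β ≠ 0`. The only nontrivial instance is `ϑ₀ δ < ϑ₀ (ε[ϑ₀ δ])`: it holds for
every suffix `ϑ₀ δ` of a term, by a recursion that compares `δ` with `ε[ϑ₀ δ]` by trichotomy and
follows the matching clause of the order.
-/

namespace TTerm

def length : TTerm → ℕ
  | zero => 0
  | theta _ b => length b + 1

lemma length_k_le (i : ℕ) : ∀ t, length (k i t) ≤ length t
  | zero => le_rfl
  | theta j b => by
    by_cases h : j ≤ i
    · simp [k, h]
    · simpa [k, h, length] using (length_k_le i b).trans (Nat.le_succ _)

lemma length_subst (a g : TTerm) : length (subst a g) = length a + length g := by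
  induction a with
  | zero => simp [subst, length]
  | theta _ b ih => simp only [subst, length, ih]; omega

lemma subst_subst (a b c : TTerm) : subst (subst a b) c = subst a (subst b c) := by
  induction a with
  | zero => rfl
  | theta _ _ ih => simp only [subst, ih]

lemma k_subst {i : ℕ} {g : TTerm} (hg : k i g = g) (a : TTerm) :
    k i (subst a g) = subst (k i a) g := by
  induction a with
  | zero => simpa [subst, k] using hg
  | theta j b ih => by_cases hj : j ≤ i <;> simp [subst, k, hj, ih]

lemma k_zero_eq (t : TTerm) :
    k 0 t = zero ∨ ∃ f c, k 0 t = theta 0 c ∧ t = subst f (theta 0 c) := by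
  induction t with
  | zero => exact .inl rfl
  | theta j b ih =>
    rcases Nat.eq_zero_or_pos j with rfl | hj
    · exact .inr ⟨zero, b, by simp [k], rfl⟩
    · rw [show k 0 (theta j b) = k 0 b by simp [k, hj.ne']]
      rcases ih with h | ⟨f, c, hc, rfl⟩
      · exact .inl h
      · exact .inr ⟨theta j f, c, hc, rfl⟩

lemma not_lt_zero (a : TTerm) : ¬ Lt a zero := by
  rintro ⟨h⟩
  exact h rfl

theorem lt_trichotomy : (a b : TTerm) → Lt a b ∨ a = b ∨ Lt b a
  | zero, zero => .inr (.inl rfl)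
  | zero, theta _ _ => .inl (.zero nofun)
  | theta _ _, zero => .inr (.inr (.zero nofun))
  | theta i x, theta j y => by
    rcases Nat.lt_trichotomy i j with h | rfl | h
    · exact .inl (.idx h)
    · rcases lt_trichotomy x y with hxy | rfl | hyx
      · rcases lt_trichotomy (k i x) (theta i y) with h | h | h
        · exact .inl (.left hxy h)
        · exact .inr (.inr (.right hxy (h ▸ .refl)))
        · exact .inr (.inr (.right hxy (.of_lt h)))
      · exact .inr (.inl rfl)
      · rcases lt_trichotomy (k i y) (theta i x) with h | h | h
        · exact .inr (.inr (.left hyx h))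
        · exact .inl (.right hyx (h ▸ .refl))
        · exact .inl (.right hyx (.of_lt h))
    · exact .inr (.inr (.idx h))
termination_by a b => length a + length b
decreasing_by
  all_goals simp only [length]
  · omega
  · have := length_k_le i x; omega
  · have := length_k_le i y; omega

theorem theta_zero_lt_theta_zero_subst (e c : TTerm) :
    Lt (theta 0 c) (theta 0 (subst e (theta 0 c))) := by
  rcases lt_trichotomy c (subst e (theta 0 c)) with h | h | h
  · refine .left h ?_
    rcases k_zero_eq c with hc | ⟨f, c', hc, rfl⟩
    · exact hc ▸ .zero nofun
    · rw [hc]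
      have := theta_zero_lt_theta_zero_subst (subst e (theta 0 f)) c'
      rwa [subst_subst] at this
  · have := congrArg length h
    simp only [length_subst, length] at this
    omega
  · refine .right h ?_
    rw [k_subst (by simp [k]) e]
    rcases k_zero_eq e with he | ⟨f, w, he, rfl⟩
    · rw [he]; exact .refl
    · rw [he]; exact .of_lt (theta_zero_lt_theta_zero_subst w c)
-- the first recursive call shifts `ϑ₀ f` from `c` to `e`, hence the weight 2
termination_by 2 * length c + length e
decreasing_by all_goals subst_vars; simp only [length_subst, length]; omega

lemma lt_subst_self {g : TTerm} (hg : g = zero ∨ ∃ d, g = theta 0 d) :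
    ∀ {b}, b ≠ zero → Lt g (subst b g)
  | zero, hb => absurd rfl hb
  | theta j c, _ => by
    rcases hg with rfl | ⟨d, rfl⟩
    · exact .zero nofun
    · rcases Nat.eq_zero_or_pos j with rfl | hj
      · exact theta_zero_lt_theta_zero_subst c d
      · exact .idx hj

theorem subst_lt_subst {g : TTerm} (hg : g = zero ∨ ∃ d, g = theta 0 d)
    {a b : TTerm} (h : Lt a b) : Lt (subst a g) (subst b g) := by
  have hk (i : ℕ) : k i g = g := by rcases hg with rfl | ⟨d, rfl⟩ <;> simp [k]
  induction h using Lt.rec (motive_2 := fun a b _ => Le (subst a g) (subst b g)) with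
  | zero hb => exact lt_subst_self hg hb
  | idx h => exact .idx h
  | left _ _ ih₁ ih₂ => exact .left ih₁ (k_subst (hk _) _ ▸ ih₂)
  | right _ _ ih₁ ih₂ => exact .right ih₁ (k_subst (hk _) _ ▸ ih₂)
  | refl => exact .refl
  | of_lt _ ih => exact .of_lt ih

lemma eq_zero_or_eq_theta_zero_of_lt_theta_one {g : TTerm} (h : Lt g (theta 1 zero)) :
    g = zero ∨ ∃ d, g = theta 0 d := by
  cases h with
  | zero => exact .inl rfl
  | idx h => exact .inr ⟨_, by rw [Nat.lt_one_iff.mp h]⟩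
  | left h => exact absurd h (not_lt_zero _)
  | right _ h =>
    simp only [k] at h
    rcases h with _ | h
    exact absurd h (not_lt_zero _)

end TTerm

/-- Substitution of a fixed `γ < Ω₁` for the last zero is strictly monotone. -/
theorem stmt5 (α β γ : TTerm) (hα : TTerm.WF α) (hβ : TTerm.WF β) (hγ : TTerm.WF γ)
    (hγ1 : TTerm.Lt γ (TTerm.theta 1 TTerm.zero)) (h : TTerm.Lt α β) :
    TTerm.Lt (TTerm.subst α γ) (TTerm.subst β γ) :=
  TTerm.subst_lt_subst (TTerm.eq_zero_or_eq_theta_zero_of_lt_theta_one hγ1) h
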